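/- Fix an integer k ≥ 2 and an alphabet Σ of k symbols. As i → ∞, T(i) − S(i) = O(k^{i/3}); more precisely, for every i ≥ 2, T(i) − S(i) ≤ Σ_{r=3}^{i} ((r−1)/2)·k^{i/r} where the exponent i/r is a real number, and this sum is O(k^{i/3}). -/

import Mathlib

open Asymptotics Filter

/-- T(i): the number of ordered triples (u,v,z) of nonempty words with uv = z, |z| = i
(the TUPLE convention). -/
noncomputable def T (k i : ℕ) : ℕ :=
  Set.ncard {t : List (Fin k) × List (Fin k) × List (Fin k) |
    t.1 ≠ [] ∧ t.2.1 ≠ [] ∧ t.1 ++ t.2.1 = t.2.2 ∧ t.2.2.length = i}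

/-- S(i): the number of such triples counted up to identifying (u,v,z) with (v,u,z)
whenever uv = vu = z (the SET convention). -/
noncomputable def S (k i : ℕ) : ℕ :=
  Set.ncard {s : Finset (List (Fin k)) | ∃ u v : List (Fin k),
    u ≠ [] ∧ v ≠ [] ∧ (u ++ v).length = i ∧ s = {u, v, u ++ v}}

/-!
Sending a triple `(u, v, uv)` to the set `{u, v, uv}` loses information only when `uv = vu`
and `u ≠ v`, where `(u, v, uv)` and `(v, u, vu)` collide; so `T(i) - S(i)` is at most the number
of commuting splits with `|u| < |v|`. Commuting words are powers `u = w^m`, `v = w^n` of a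
common word, and with `r = m + n` such a split is fixed by `1 ≤ m ≤ (r - 1) / 2` and by a word
`w` of length `i / r`, giving the bound `∑_{r=3}^{i} (r - 1)/2 · k^(i/r)`. Its `r = 3` term is
`k^(i/3)`, and the remaining ones sum to at most `i² k^(i/4) = o(k^(i/3))`.
-/

namespace List

variable {α : Type*}

theorem exists_eq_flatten_replicate_of_append_comm {u v : List α} (h : u ++ v = v ++ u) :
    ∃ (w : List α) (m n : ℕ), u = (replicate m w).flatten ∧ v = (replicate n w).flatten := by
  induction hN : u.length + v.length using Nat.strong_induction_on generalizing u v with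
  | _ N ih =>
    wlog hle : u.length ≤ v.length generalizing u v
    · obtain ⟨w, m, n, hu, hv⟩ := this h.symm (by omega) (by omega)
      exact ⟨w, n, m, hv, hu⟩
    rcases eq_or_ne u [] with rfl | hu
    · exact ⟨v, 0, 1, by simp, by simp⟩
    have hpre : u <+: v :=
      prefix_of_prefix_length_le (h ▸ prefix_append u v) (prefix_append v u) hle
    obtain ⟨t, rfl⟩ := hpre
    have hcomm : u ++ t = t ++ u := by simpa using h
    obtain ⟨w, m, n, rfl, rfl⟩ := ih _ (by simp [← hN, length_pos_iff.mpr hu]) hcomm rfl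
    exact ⟨w, m, m + n, rfl, by rw [replicate_add, flatten_append]⟩

theorem eq_and_eq_or_eq_and_eq_of_insert_eq [DecidableEq α] {u v u' v' : List α}
    (hu : u ≠ []) (hv : v ≠ []) (hu' : u' ≠ []) (hv' : v' ≠ [])
    (hl : (u ++ v).length = (u' ++ v').length)
    (h : ({u, v, u ++ v} : Finset (List α)) = {u', v', u' ++ v'}) :
    (u = u' ∧ v = v') ∨ (u = v' ∧ v = u' ∧ u ++ v = v ++ u) := by
  have hu0 := length_pos_iff.mpr hu
  have hv0 := length_pos_iff.mpr hv
  have hu0' := length_pos_iff.mpr hu'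
  have hv0' := length_pos_iff.mpr hv'
  simp only [length_append] at hl
  have mem (x : List α) (hx : x ∈ ({u, v, u ++ v} : Finset (List α))) :
      x = u' ∨ x = v' ∨ x = u' ++ v' := by simpa [h] using hx
  have mem' (x : List α) (hx : x ∈ ({u', v', u' ++ v'} : Finset (List α))) :
      x = u ∨ x = v ∨ x = u ++ v := by simpa [← h] using hx
  have hz : u ++ v = u' ++ v' := by
    rcases mem (u ++ v) (by simp) with h | h | h <;>
      first | exact h | (have := congrArg length h; simp at this; omega)
  have hu_mem : u = u' ∨ u = v' := by
    rcases mem u (by simp) with h | h | h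
    · exact .inl h
    · exact .inr h
    · have := congrArg length h; simp at this; omega
  have hu'_mem : u' = u ∨ u' = v := by
    rcases mem' u' (by simp) with h | h | h
    · exact .inl h
    · exact .inr h
    · have := congrArg length h; simp at this; omega
  rcases hu_mem with rfl | rfl
  · exact .inl ⟨rfl, append_cancel_left hz⟩
  rcases hu'_mem with rfl | rfl
  · exact .inl ⟨rfl, append_cancel_left hz⟩
  · exact .inr ⟨rfl, rfl, hz⟩

end List

section Splits

variable (α : Type*)

def splits (i : ℕ) : Set (List α × List α × List α) :=
  {t | t.1 ≠ [] ∧ t.2.1 ≠ [] ∧ t.1 ++ t.2.1 = t.2.2 ∧ t.2.2.length = i}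

def commutingSplits (i : ℕ) : Set (List α × List α × List α) :=
  {t ∈ splits α i | t.1 ++ t.2.1 = t.2.1 ++ t.1 ∧ t.1.length < t.2.1.length}

variable {α}

def splitSet [DecidableEq α] (t : List α × List α × List α) : Finset (List α) :=
  {t.1, t.2.1, t.2.2}

theorem splits_finite [Finite α] (i : ℕ) : (splits α i).Finite := by
  refine (((List.finite_length_le α i).prod
    ((List.finite_length_le α i).prod (List.finite_length_eq α i)))).subset ?_
  rintro ⟨u, v, _⟩ ⟨-, -, (rfl : u ++ v = _), hl : (u ++ v).length = i⟩
  simp only [Set.mem_prod, Set.mem_ofPred_eq, List.length_append] at hl ⊢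
  omega

theorem injOn_splitSet [DecidableEq α] (i : ℕ) :
    Set.InjOn splitSet (splits α i \ commutingSplits α i) := by
  rintro ⟨u, v, _⟩ ⟨⟨hu : u ≠ [], hv : v ≠ [], (rfl : u ++ v = _), hl⟩, hnc⟩
    ⟨u', v', _⟩ ⟨⟨hu' : u' ≠ [], hv' : v' ≠ [], (rfl : u' ++ v' = _), hl'⟩, hnc'⟩ h
  rcases List.eq_and_eq_or_eq_and_eq_of_insert_eq hu hv hu' hv' (hl.trans hl'.symm) h with
    ⟨rfl, rfl⟩ | ⟨rfl, rfl, hcomm⟩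
  · rfl
  rcases lt_trichotomy u.length v.length with hlt | heq | hgt
  · exact absurd ⟨⟨hu, hv, rfl, hl⟩, hcomm, hlt⟩ hnc
  · rw [(List.append_inj hcomm heq).1]
  · exact absurd ⟨⟨hu', hv', rfl, hl'⟩, hcomm.symm, hgt⟩ hnc'

theorem ncard_splits_le [Finite α] [DecidableEq α] (i : ℕ) :
    (splits α i).ncard ≤ (splitSet '' splits α i).ncard + (commutingSplits α i).ncard := by
  have hfin := splits_finite (α := α) i
  have hsub : commutingSplits α i ⊆ splits α i := fun _ ht => ht.1
  calc (splits α i).ncard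
      = (splits α i \ commutingSplits α i).ncard + (commutingSplits α i).ncard :=
        (Set.ncard_sdiff_add_ncard_of_subset hsub hfin).symm
    _ = (splitSet '' (splits α i \ commutingSplits α i)).ncard + (commutingSplits α i).ncard := by
        rw [(injOn_splitSet i).ncard_image]
    _ ≤ (splitSet '' splits α i).ncard + (commutingSplits α i).ncard := by
        gcongr
        exacts [hfin.image _, Set.sdiff_subset]

variable (α) in
def wordsOfLength [Fintype α] (n : ℕ) : Finset (List α) :=
  (Finset.univ : Finset (List.Vector α n)).map
    ⟨List.Vector.toList, List.Vector.toList_injective⟩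

@[simp]
theorem mem_wordsOfLength [Fintype α] {n : ℕ} {w : List α} :
    w ∈ wordsOfLength α n ↔ w.length = n := by
  simp only [wordsOfLength, Finset.mem_map, Finset.mem_univ, true_and,
    Function.Embedding.coeFn_mk]
  exact ⟨fun ⟨v, hv⟩ => hv ▸ v.toList_length, fun h => ⟨⟨w, h⟩, rfl⟩⟩

theorem card_wordsOfLength [Fintype α] (n : ℕ) :
    (wordsOfLength α n).card = Fintype.card α ^ n := by
  rw [wordsOfLength, Finset.card_map, Finset.card_univ, card_vector]

open Finset in
variable (α) in
/-- A commuting split `(w^m, w^n, w^(m+n))` with `1 ≤ m < n` occurs here with `r = m + n`. -/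
def commutingSplitsCover [Fintype α] [DecidableEq α] (i : ℕ) :
    Finset (List α × List α × List α) :=
  (Icc 3 i).biUnion fun r => (Icc 1 ((r - 1) / 2) ×ˢ wordsOfLength α (i / r)).image fun p =>
    ((List.replicate p.1 p.2).flatten, (List.replicate (r - p.1) p.2).flatten,
      (List.replicate r p.2).flatten)

theorem commutingSplits_subset_cover [Fintype α] [DecidableEq α] (i : ℕ) :
    commutingSplits α i ⊆ commutingSplitsCover α i := by
  rintro ⟨u, v, _⟩ ⟨⟨hu : u ≠ [], hv : v ≠ [], (rfl : u ++ v = _), hl⟩, hcomm, hlt⟩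
  obtain ⟨w, m, n, rfl, rfl⟩ := List.exists_eq_flatten_replicate_of_append_comm hcomm
  have hmw : 0 < m * w.length := by simpa using List.length_pos_iff.mpr hu
  simp only [List.length_flatten, List.map_replicate, List.sum_replicate, smul_eq_mul,
    List.length_append] at hl hlt
  have hw : 0 < w.length := Nat.pos_of_mul_pos_left hmw
  have hm : 0 < m := Nat.pos_of_mul_pos_right hmw
  have hmn : m < n := Nat.lt_of_mul_lt_mul_right hlt
  have hi : w.length = i / (m + n) := by
    rw [← hl, ← add_mul, Nat.mul_div_cancel_left _ (by omega)]
  simp only [commutingSplitsCover, Finset.mem_coe, Finset.mem_biUnion, Finset.mem_image,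
    Finset.mem_product, Finset.mem_Icc, mem_wordsOfLength, Prod.exists, Prod.mk.injEq]
  refine ⟨m + n, ⟨by omega, ?_⟩, m, w, ⟨⟨hm, by omega⟩, hi⟩, rfl, by simp,
    by rw [List.replicate_add, List.flatten_append]⟩
  rw [← hl, ← add_mul]
  exact Nat.le_mul_of_pos_right _ hw

theorem ncard_commutingSplits_le [Fintype α] [DecidableEq α] (i : ℕ) :
    (commutingSplits α i).ncard ≤
      ∑ r ∈ Finset.Icc 3 i, (r - 1) / 2 * Fintype.card α ^ (i / r) := by
  refine (Set.ncard_le_ncard (commutingSplits_subset_cover i) (Finset.finite_toSet _)).trans ?_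
  rw [Set.ncard_coe_finset]
  refine Finset.card_biUnion_le.trans (Finset.sum_le_sum fun r _ => Finset.card_image_le.trans ?_)
  rw [Finset.card_product, Nat.card_Icc, card_wordsOfLength, Nat.add_sub_cancel]

end Splits

theorem T_eq_ncard (k i : ℕ) : T k i = (splits (Fin k) i).ncard := rfl

theorem S_eq_ncard_image (k i : ℕ) : S k i = (splitSet '' splits (Fin k) i).ncard := by
  rw [S]
  congr 1
  ext s
  constructor
  · rintro ⟨u, v, hu, hv, hl, rfl⟩
    exact ⟨(u, v, u ++ v), ⟨hu, hv, rfl, hl⟩, rfl⟩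
  · rintro ⟨⟨u, v, _⟩, ⟨hu, hv, (rfl : u ++ v = _), hl⟩, rfl⟩
    exact ⟨u, v, hu, hv, hl, rfl⟩

theorem S_le_T (k i : ℕ) : S k i ≤ T k i := by
  rw [S_eq_ncard_image, T_eq_ncard]
  exact Set.ncard_image_le (splits_finite i)

theorem T_sub_S_le (k : ℕ) (hk : 1 ≤ k) (i : ℕ) :
    (T k i : ℝ) - S k i ≤ ∑ r ∈ Finset.Icc 3 i, ((r : ℝ) - 1) / 2 * (k : ℝ) ^ ((i : ℝ) / r) := by
  have hcount : T k i ≤ S k i + ∑ r ∈ Finset.Icc 3 i, (r - 1) / 2 * k ^ (i / r) := by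
    rw [S_eq_ncard_image, T_eq_ncard]
    simpa using (ncard_splits_le (α := Fin k) i).trans
      (Nat.add_le_add_left (ncard_commutingSplits_le i) _)
  have hk' : (1 : ℝ) ≤ k := by exact_mod_cast hk
  calc (T k i : ℝ) - S k i ≤ ∑ r ∈ Finset.Icc 3 i, (((r - 1) / 2 * k ^ (i / r) : ℕ) : ℝ) := by
        rw [sub_le_iff_le_add', ← Nat.cast_sum, ← Nat.cast_add]
        exact_mod_cast hcount
    _ ≤ _ := by
        refine Finset.sum_le_sum fun r hr => ?_
        have hcoef : (((r - 1) / 2 : ℕ) : ℝ) ≤ ((r : ℝ) - 1) / 2 := by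
          rw [← Nat.cast_pred (by grind)]
          exact_mod_cast Nat.cast_div_le
        have hpow : (k : ℝ) ^ (i / r) ≤ (k : ℝ) ^ ((i : ℝ) / r) := by
          rw [← Real.rpow_natCast]
          exact Real.rpow_le_rpow_of_exponent_le hk' Nat.cast_div_le
        push_cast
        exact mul_le_mul hcoef hpow (by positivity) ((Nat.cast_nonneg _).trans hcoef)

theorem sum_Icc_three_le {x : ℝ} (hx : 1 ≤ x) {i : ℕ} (hi : 3 ≤ i) :
    ∑ r ∈ Finset.Icc 3 i, ((r : ℝ) - 1) / 2 * x ^ ((i : ℝ) / r) ≤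
      x ^ ((i : ℝ) / 3) + (i : ℝ) ^ 2 * x ^ ((i : ℝ) / 4) := by
  rw [← Finset.insert_Icc_add_one_left_eq_Icc hi, Finset.sum_insert (by simp)]
  norm_num only [Nat.cast_ofNat, one_mul]
  gcongr
  calc ∑ r ∈ Finset.Icc 4 i, ((r : ℝ) - 1) / 2 * x ^ ((i : ℝ) / r)
      ≤ ∑ r ∈ Finset.Icc 4 i, (i : ℝ) * x ^ ((i : ℝ) / 4) := by
        refine Finset.sum_le_sum fun r hr => ?_
        obtain ⟨hr4, hri⟩ := Finset.mem_Icc.mp hr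
        have hr4' : (4 : ℝ) ≤ r := by exact_mod_cast hr4
        have hri' : (r : ℝ) ≤ i := by exact_mod_cast hri
        gcongr
        linarith
    _ ≤ (i : ℝ) ^ 2 * x ^ ((i : ℝ) / 4) := by
        rw [Finset.sum_const, Nat.card_Icc, nsmul_eq_mul, ← mul_assoc, sq]
        gcongr
        exact_mod_cast Nat.sub_le_of_le_add (by omega)

theorem sum_Icc_three_nonneg (x : ℝ) (hx : 0 ≤ x) (i : ℕ) :
    0 ≤ ∑ r ∈ Finset.Icc 3 i, ((r : ℝ) - 1) / 2 * x ^ ((i : ℝ) / r) := by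
  refine Finset.sum_nonneg fun r hr => ?_
  have : (3 : ℝ) ≤ r := by exact_mod_cast (Finset.mem_Icc.mp hr).1
  have : 0 ≤ ((r : ℝ) - 1) / 2 := by linarith
  positivity

theorem isBigO_sq_mul_rpow_div_four {x : ℝ} (hx : 1 < x) :
    (fun i : ℕ => (i : ℝ) ^ 2 * x ^ ((i : ℝ) / 4)) =O[atTop] fun i : ℕ => x ^ ((i : ℝ) / 3) := by
  have hx0 : 0 < x := by linarith
  have hc : 1 < x ^ ((1 : ℝ) / 12) := Real.one_lt_rpow hx (by norm_num)
  refine ((isLittleO_pow_const_const_pow_of_one_lt 2 hc).isBigO.mul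
    (isBigO_refl (fun i : ℕ => x ^ ((i : ℝ) / 4)) atTop)).congr_right fun i => ?_
  rw [← Real.rpow_natCast, ← Real.rpow_mul hx0.le, ← Real.rpow_add hx0]
  ring_nf

theorem isBigO_sum_Icc_three {x : ℝ} (hx : 1 < x) :
    (fun i : ℕ => ∑ r ∈ Finset.Icc 3 i, ((r : ℝ) - 1) / 2 * x ^ ((i : ℝ) / r)) =O[atTop]
      fun i : ℕ => x ^ ((i : ℝ) / 3) := by
  have hbound : (fun i : ℕ => ∑ r ∈ Finset.Icc 3 i, ((r : ℝ) - 1) / 2 * x ^ ((i : ℝ) / r))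
      =O[atTop] fun i : ℕ => x ^ ((i : ℝ) / 3) + (i : ℝ) ^ 2 * x ^ ((i : ℝ) / 4) := by
    refine IsBigO.of_norm_eventuallyLE ?_
    filter_upwards [eventually_ge_atTop 3] with i hi
    rw [Real.norm_of_nonneg (sum_Icc_three_nonneg x (by linarith) i)]
    exact sum_Icc_three_le hx.le hi
  exact hbound.trans ((isBigO_refl _ _).add (isBigO_sq_mul_rpow_div_four hx))

/-- T(i) − S(i) = O(k^{i/3}); more precisely, for every i ≥ 2,
T(i) − S(i) ≤ Σ_{r=3}^{i} ((r−1)/2)·k^{i/r} (real exponent), and this sum is O(k^{i/3}). -/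
theorem stmt_11 (k : ℕ) (hk : 2 ≤ k) :
    (fun i : ℕ => (T k i : ℝ) - (S k i : ℝ)) =O[atTop]
      (fun i : ℕ => (k : ℝ) ^ ((i : ℝ) / 3)) ∧
    (∀ i : ℕ, 2 ≤ i →
      (T k i : ℝ) - (S k i : ℝ) ≤
        ∑ r ∈ Finset.Icc 3 i, ((r : ℝ) - 1) / 2 * (k : ℝ) ^ ((i : ℝ) / (r : ℝ))) ∧
    (fun i : ℕ => ∑ r ∈ Finset.Icc 3 i, ((r : ℝ) - 1) / 2 * (k : ℝ) ^ ((i : ℝ) / (r : ℝ)))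
      =O[atTop] (fun i : ℕ => (k : ℝ) ^ ((i : ℝ) / 3)) := by
  have hk1 : (1 : ℝ) < k := by exact_mod_cast hk
  have hdefect (i : ℕ) := T_sub_S_le k (by omega) i
  refine ⟨?_, fun i _ => hdefect i, isBigO_sum_Icc_three hk1⟩
  refine (IsBigO.of_norm_eventuallyLE (Eventually.of_forall fun i => ?_)).trans
    (isBigO_sum_Icc_three hk1)
  dsimp only
  rw [Real.norm_of_nonneg (sub_nonneg.mpr (by exact_mod_cast S_le_T k i))]
  exact hdefect i
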